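/- Let P ∈ P_m(ℂ^{n×n}) be regular, and suppose P is Hermitian or skew-Hermitian; let S denote, correspondingly, the Hermitian or the skew-Hermitian polynomials in P_m(ℂ^{n×n}). Then for every λ ∈ ℝ and for M ∈ {F, 2}: η_M^S(λ, P) = η(λ, P). Consequently, for every ε > 0, σ_ε^S(P) ∩ ℝ = σ_ε(P) ∩ ℝ for both norms. -/

import Mathlib

/-!
At a real point `λ` the matrix `H = P(λ)` is Hermitian (for skew-Hermitian `P` pass to `iP`, which
changes neither norms nor backward errors). If `(P(λ) + ΔP(λ)) x = 0` for a unit vector `x`, then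
`‖ΔP‖ ≥ ‖H x‖ / ‖(1, λ, …, λ^m)‖ ≥ |μ| / ‖(1, λ, …, λ^m)‖` with `μ` an eigenvalue of `H` of least
modulus, whatever the structure of `ΔP`. The bound is attained by the Hermitian rank-one
perturbation `ΔA_j = -μ λ^j y yᴴ / ‖(1, λ, …, λ^m)‖²`, `y` a unit eigenvector for `μ`, so the
structured and the unstructured backward errors at `λ` both equal `|μ| / ‖(1, λ, …, λ^m)‖`.
Every unit vector is annihilated by some Hermitian perturbation (a rank-two correction), so no
infimum is taken over an empty set, where `sInf` would return the junk value `0`.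
-/

open scoped ComplexConjugate
open Matrix

noncomputable section

variable {ι : Type*} [Fintype ι] [DecidableEq ι]

/-- Evaluation of the matrix polynomial with coefficient list `A` at the point `z`. -/
def polyEval {m : ℕ} (A : Fin (m+1) → Matrix ι ι ℂ) (z : ℂ) : Matrix ι ι ℂ :=
  ∑ j : Fin (m+1), z ^ (j : ℕ) • A j

/-- Squared Euclidean norm of a complex vector. -/
def vecNormSq (x : ι → ℂ) : ℝ := ∑ i, ‖x i‖ ^ 2

/-- Euclidean norm of a complex vector. -/
def vecNorm (x : ι → ℂ) : ℝ := Real.sqrt (vecNormSq x)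

/-- `‖(1, z, …, z^m)‖₂²`. -/
def lamNormSq (m : ℕ) (z : ℂ) : ℝ := ∑ j : Fin (m+1), ‖z ^ (j : ℕ)‖ ^ 2

/-- Squared Frobenius norm of a matrix. -/
def frobNormSq (M : Matrix ι ι ℂ) : ℝ := ∑ i, ∑ k, ‖M i k‖ ^ 2

/-- Spectral (operator 2-) norm of a matrix. -/
def specNorm (M : Matrix ι ι ℂ) : ℝ := ‖Matrix.toEuclideanCLM (𝕜 := ℂ) M‖

/-- Frobenius norm of a matrix polynomial: `(Σ_j ‖A_j‖_F²)^{1/2}`. -/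
def polyNormF {m : ℕ} (A : Fin (m+1) → Matrix ι ι ℂ) : ℝ :=
  Real.sqrt (∑ j, frobNormSq (A j))

/-- Spectral norm of a matrix polynomial: `(Σ_j ‖A_j‖₂²)^{1/2}`. -/
def polyNorm2 {m : ℕ} (A : Fin (m+1) → Matrix ι ι ℂ) : ℝ :=
  Real.sqrt (∑ j, specNorm (A j) ^ 2)

/-- Structured backward error of `(lam, x)` as an approximate eigenpair of the matrix
polynomial `A`, with respect to the polynomial norm `N` and the structure class `S`. -/
def eta {m : ℕ} (N : (Fin (m+1) → Matrix ι ι ℂ) → ℝ)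
    (S : Set (Fin (m+1) → Matrix ι ι ℂ)) (lam : ℂ) (x : ι → ℂ)
    (A : Fin (m+1) → Matrix ι ι ℂ) : ℝ :=
  sInf {t | ∃ ΔA ∈ S, (polyEval A lam + polyEval ΔA lam) *ᵥ x = 0 ∧ t = N ΔA}

/-- A matrix polynomial is regular if `det P(z) ≠ 0` for some `z`. -/
def Regular {m : ℕ} (A : Fin (m+1) → Matrix ι ι ℂ) : Prop :=
  ∃ z : ℂ, (polyEval A z).det ≠ 0


/-- Backward error of `lam` as an approximate eigenvalue of the matrix polynomial `A`,
w.r.t. the polynomial norm `N` and the structure class `S`: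
the infimum of `eta N S lam x A` over all unit vectors `x`. -/
def etaEig {m : ℕ} (N : (Fin (m+1) → Matrix ι ι ℂ) → ℝ)
    (S : Set (Fin (m+1) → Matrix ι ι ℂ)) (lam : ℂ)
    (A : Fin (m+1) → Matrix ι ι ℂ) : ℝ :=
  sInf {t | ∃ x : ι → ℂ, star x ⬝ᵥ x = 1 ∧ t = eta N S lam x A}

/-- The class of Hermitian matrix polynomials. -/
def HermPoly {ι : Type*} [Fintype ι] [DecidableEq ι] {m : ℕ} :
    Set (Fin (m+1) → Matrix ι ι ℂ) := {B | ∀ j, (B j)ᴴ = B j}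

/-- The class of skew-Hermitian matrix polynomials. -/
def SkewHermPoly {ι : Type*} [Fintype ι] [DecidableEq ι] {m : ℕ} :
    Set (Fin (m+1) → Matrix ι ι ℂ) := {B | ∀ j, (B j)ᴴ = -(B j)}

end

open WithLp (toLp)
open scoped Pointwise

section EuclideanVectors

variable {ι : Type*} [Fintype ι]

lemma norm_toLp_eq_one {x : ι → ℂ} (hx : star x ⬝ᵥ x = 1) : ‖toLp 2 x‖ = 1 := by
  have h : ‖toLp 2 x‖ ^ 2 = 1 := by
    rw [← inner_self_eq_norm_sq (𝕜 := ℂ), EuclideanSpace.inner_toLp_toLp, dotProduct_comm, hx,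
      RCLike.one_re]
  exact (pow_eq_one_iff_of_nonneg (norm_nonneg _) two_ne_zero).1 h

lemma norm_star_dotProduct_le (y x : ι → ℂ) : ‖star y ⬝ᵥ x‖ ≤ ‖toLp 2 y‖ * ‖toLp 2 x‖ := by
  rw [dotProduct_comm, ← EuclideanSpace.inner_toLp_toLp]
  exact norm_inner_le_norm _ _

lemma frobNormSq_nonneg (M : Matrix ι ι ℂ) : 0 ≤ frobNormSq M := by
  unfold frobNormSq; positivity

lemma norm_mulVec_le_sqrt_frobNormSq (M : Matrix ι ι ℂ) (x : ι → ℂ) :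
    ‖toLp 2 (M *ᵥ x)‖ ≤ √(frobNormSq M) * ‖toLp 2 x‖ := by
  simp only [EuclideanSpace.norm_eq]
  rw [← Real.sqrt_mul (frobNormSq_nonneg M), frobNormSq, Finset.sum_mul]
  gcongr with i
  calc ‖(M *ᵥ x) i‖ ^ 2 ≤ (∑ k, ‖M i k‖ * ‖x k‖) ^ 2 := by
        gcongr
        exact (norm_sum_le _ _).trans_eq (by simp)
    _ ≤ (∑ k, ‖M i k‖ ^ 2) * ∑ k, ‖x k‖ ^ 2 := Finset.sum_mul_sq_le_sq_mul_sq _ _ _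

lemma vecMulVec_star_mulVec (y x : ι → ℂ) : vecMulVec y (star y) *ᵥ x = (star y ⬝ᵥ x) • y := by
  rw [vecMulVec_mulVec, op_smul_eq_smul]

end EuclideanVectors

section MatrixNorms

variable {ι : Type*} [Fintype ι]

structure IsAdmissibleNorm (n : Matrix ι ι ℂ → ℝ) : Prop where
  nonneg : ∀ M, 0 ≤ n M
  smul : ∀ (c : ℂ) M, n (c • M) = ‖c‖ * n M
  mulVec_le : ∀ M x, ‖toLp 2 (M *ᵥ x)‖ ≤ n M * ‖toLp 2 x‖
  vecMulVec_star_le : ∀ y, star y ⬝ᵥ y = 1 → n (vecMulVec y (star y)) ≤ 1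

theorem isAdmissibleNorm_specNorm [DecidableEq ι] : IsAdmissibleNorm (specNorm (ι := ι)) where
  nonneg _ := norm_nonneg _
  smul c M := by simp only [specNorm, map_smul, norm_smul]
  mulVec_le M x := (toEuclideanCLM (𝕜 := ℂ) M).le_opNorm (toLp 2 x)
  vecMulVec_star_le y hy := by
    refine ContinuousLinearMap.opNorm_le_bound _ zero_le_one fun v => ?_
    rw [← WithLp.toLp_ofLp (p := 2) v, toEuclideanCLM_toLp, vecMulVec_star_mulVec, WithLp.toLp_smul,
      norm_smul, norm_toLp_eq_one hy, mul_one, one_mul]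
    exact (norm_star_dotProduct_le y _).trans_eq (by rw [norm_toLp_eq_one hy, one_mul])

theorem isAdmissibleNorm_sqrt_frobNormSq :
    IsAdmissibleNorm (fun M : Matrix ι ι ℂ => √(frobNormSq M)) where
  nonneg _ := Real.sqrt_nonneg _
  smul c M := by
    simp only [frobNormSq, Matrix.smul_apply, smul_eq_mul, norm_mul, mul_pow, ← Finset.mul_sum]
    rw [Real.sqrt_mul (by positivity), Real.sqrt_sq (norm_nonneg c)]
  mulVec_le := norm_mulVec_le_sqrt_frobNormSq
  vecMulVec_star_le y hy := by
    have hy' : ∑ i, ‖y i‖ ^ 2 = 1 := by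
      simpa [norm_toLp_eq_one hy] using (EuclideanSpace.norm_sq_eq (toLp 2 y)).symm
    simp [frobNormSq, vecMulVec_apply, mul_pow, ← Finset.mul_sum, hy']

end MatrixNorms

section MatrixPolynomials

variable {ι : Type*} {m : ℕ}

lemma polyEval_smul (c : ℂ) (B : Fin (m+1) → Matrix ι ι ℂ) (z : ℂ) :
    polyEval (c • B) z = c • polyEval B z := by
  simp only [polyEval, Pi.smul_apply, Finset.smul_sum, smul_comm c]

lemma lamNormSq_ofReal (lam : ℝ) :
    lamNormSq m (lam : ℂ) = ∑ j : Fin (m+1), (lam ^ (j : ℕ)) ^ 2 := by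
  simp only [lamNormSq, ← Complex.ofReal_pow, Complex.norm_real, Real.norm_eq_abs, sq_abs]

lemma lamNormSq_pos (z : ℂ) : 0 < lamNormSq m z :=
  lt_of_lt_of_le (by simp) (Finset.single_le_sum (f := fun j : Fin (m+1) => ‖z ^ (j : ℕ)‖ ^ 2)
    (fun _ _ => sq_nonneg _) (Finset.mem_univ 0))

/-- The coefficients `(1, λ, …, λ^m) / ‖(1, λ, …, λ^m)‖²` make this the polynomial of least norm
with value `G` at `λ`. -/
noncomputable def minNormLift (m : ℕ) (lam : ℝ) (G : Matrix ι ι ℂ) : Fin (m+1) → Matrix ι ι ℂ :=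
  fun j => ((lam ^ (j : ℕ) / lamNormSq m lam : ℝ) : ℂ) • G

lemma polyEval_minNormLift (lam : ℝ) (G : Matrix ι ι ℂ) :
    polyEval (minNormLift m lam G) lam = G := by
  have hL := (lamNormSq_pos (m := m) (lam : ℂ)).ne'
  have hsum : ∑ j : Fin (m+1), (lam : ℂ) ^ (j : ℕ) * ((lam ^ (j : ℕ) / lamNormSq m lam : ℝ) : ℂ)
      = 1 := by
    rw [← Complex.ofReal_one, ← div_self hL, lamNormSq_ofReal, Finset.sum_div]
    push_cast
    exact Finset.sum_congr rfl fun j _ => by ring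
  simp only [polyEval, minNormLift, smul_smul, ← Finset.sum_smul, hsum, one_smul]

variable [Fintype ι]

noncomputable def polyNormOf (n : Matrix ι ι ℂ → ℝ) (B : Fin (m+1) → Matrix ι ι ℂ) : ℝ :=
  √(∑ j, n (B j) ^ 2)

lemma polyNorm2_eq_polyNormOf [DecidableEq ι] :
    polyNorm2 (ι := ι) (m := m) = polyNormOf specNorm := rfl

lemma polyNormF_eq_polyNormOf :
    polyNormF (ι := ι) (m := m) = polyNormOf fun M => √(frobNormSq M) := by
  ext B
  simp only [polyNormF, polyNormOf, Real.sq_sqrt (frobNormSq_nonneg _)]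

lemma polyNormOf_smul {n : Matrix ι ι ℂ → ℝ} (hn : IsAdmissibleNorm n) (c : ℂ)
    (B : Fin (m+1) → Matrix ι ι ℂ) : polyNormOf n (c • B) = ‖c‖ * polyNormOf n B := by
  simp only [polyNormOf, Pi.smul_apply, hn.smul, mul_pow, ← Finset.mul_sum]
  rw [Real.sqrt_mul (sq_nonneg _), Real.sqrt_sq (norm_nonneg c)]

lemma polyEval_mulVec (B : Fin (m+1) → Matrix ι ι ℂ) (z : ℂ) (x : ι → ℂ) :
    polyEval B z *ᵥ x = ∑ j : Fin (m+1), z ^ (j : ℕ) • (B j *ᵥ x) := by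
  simp only [polyEval, sum_mulVec, smul_mulVec]

theorem norm_polyEval_mulVec_le {n : Matrix ι ι ℂ → ℝ} (hn : IsAdmissibleNorm n)
    (B : Fin (m+1) → Matrix ι ι ℂ) (z : ℂ) (x : ι → ℂ) :
    ‖toLp 2 (polyEval B z *ᵥ x)‖ ≤ √(lamNormSq m z) * polyNormOf n B * ‖toLp 2 x‖ := by
  rw [polyEval_mulVec, WithLp.toLp_sum]
  calc ‖∑ j : Fin (m+1), toLp 2 (z ^ (j : ℕ) • (B j *ᵥ x))‖
      ≤ ∑ j : Fin (m+1), ‖z ^ (j : ℕ)‖ * (n (B j) * ‖toLp 2 x‖) := by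
        refine (norm_sum_le _ _).trans (Finset.sum_le_sum fun j _ => ?_)
        rw [WithLp.toLp_smul, norm_smul]
        exact mul_le_mul_of_nonneg_left (hn.mulVec_le _ _) (norm_nonneg _)
    _ = (∑ j : Fin (m+1), ‖z ^ (j : ℕ)‖ * n (B j)) * ‖toLp 2 x‖ := by
        rw [Finset.sum_mul]; simp only [mul_assoc]
    _ ≤ √(lamNormSq m z) * polyNormOf n B * ‖toLp 2 x‖ := by
        gcongr
        exact Real.sum_mul_le_sqrt_mul_sqrt _ _ _

lemma polyNormOf_minNormLift {n : Matrix ι ι ℂ → ℝ} (hn : IsAdmissibleNorm n) (lam : ℝ)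
    (G : Matrix ι ι ℂ) : polyNormOf n (minNormLift m lam G) = n G / √(lamNormSq m lam) := by
  have hL := lamNormSq_pos (m := m) (lam : ℂ)
  have hsum : ∑ j : Fin (m+1), (lam ^ (j : ℕ) / lamNormSq m lam) ^ 2 = 1 / lamNormSq m lam := by
    simp only [div_pow, ← Finset.sum_div, ← lamNormSq_ofReal]
    field_simp
  simp only [polyNormOf, minNormLift, hn.smul, Complex.norm_real, Real.norm_eq_abs, mul_pow,
    sq_abs, ← Finset.sum_mul, hsum]
  rw [Real.sqrt_mul (by positivity), Real.sqrt_sq (hn.nonneg G), Real.sqrt_div' _ hL.le,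
    Real.sqrt_one]
  ring

lemma minNormLift_mem_hermPoly [DecidableEq ι] (lam : ℝ) {G : Matrix ι ι ℂ} (hG : G.IsHermitian) :
    minNormLift m lam G ∈ HermPoly := fun j => by
  rw [minNormLift, conjTranspose_smul, hG.eq, Complex.star_def, Complex.conj_ofReal]

lemma polyEval_isHermitian [DecidableEq ι] {A : Fin (m+1) → Matrix ι ι ℂ} (hA : A ∈ HermPoly)
    (lam : ℝ) : (polyEval A lam).IsHermitian := by
  simp only [IsHermitian, polyEval, conjTranspose_sum, conjTranspose_smul, hA _, star_pow,
    Complex.star_def, Complex.conj_ofReal]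

end MatrixPolynomials

section BackwardErrors

variable {ι : Type*} [Fintype ι] {m : ℕ} {N : (Fin (m+1) → Matrix ι ι ℂ) → ℝ}
  {S : Set (Fin (m+1) → Matrix ι ι ℂ)} {z : ℂ} {A : Fin (m+1) → Matrix ι ι ℂ}

lemma etaEig_of_isEmpty [IsEmpty ι] : etaEig N S z A = 0 := by
  simp [etaEig]

theorem etaEig_eq_of_bounds {β : ℝ}
    (hlow : ∀ x, star x ⬝ᵥ x = 1 → ∀ Δ, (polyEval A z + polyEval Δ z) *ᵥ x = 0 → β ≤ N Δ)
    (hfeas : ∀ x, star x ⬝ᵥ x = 1 → ∃ Δ ∈ S, (polyEval A z + polyEval Δ z) *ᵥ x = 0)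
    (hopt : ∃ y, star y ⬝ᵥ y = 1 ∧ ∃ Δ ∈ S, (polyEval A z + polyEval Δ z) *ᵥ y = 0 ∧ N Δ ≤ β) :
    etaEig N S z A = β := by
  have hbdd : ∀ x, star x ⬝ᵥ x = 1 → β ∈ lowerBounds
      {t | ∃ Δ ∈ S, (polyEval A z + polyEval Δ z) *ᵥ x = 0 ∧ t = N Δ} := by
    rintro x hx _ ⟨Δ, -, hΔ, rfl⟩
    exact hlow x hx Δ hΔ
  have hη : β ∈ lowerBounds {t | ∃ x : ι → ℂ, star x ⬝ᵥ x = 1 ∧ t = eta N S z x A} := by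
    rintro _ ⟨x, hx, rfl⟩
    obtain ⟨Δ, hΔS, hΔ⟩ := hfeas x hx
    exact le_csInf ⟨_, Δ, hΔS, hΔ, rfl⟩ (hbdd x hx)
  obtain ⟨y, hy, Δ, hΔS, hΔ, hΔβ⟩ := hopt
  have hηy : eta N S z y A ≤ β := (csInf_le ⟨β, hbdd y hy⟩ ⟨Δ, hΔS, hΔ, rfl⟩).trans hΔβ
  exact le_antisymm ((csInf_le ⟨β, hη⟩ ⟨y, hy, rfl⟩).trans hηy) (le_csInf ⟨_, y, hy, rfl⟩ hη)

theorem etaEig_eq_etaEig_univ_of_bounds {β : ℝ}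
    (hlow : ∀ x, star x ⬝ᵥ x = 1 → ∀ Δ, (polyEval A z + polyEval Δ z) *ᵥ x = 0 → β ≤ N Δ)
    (hfeas : ∀ x, star x ⬝ᵥ x = 1 → ∃ Δ ∈ S, (polyEval A z + polyEval Δ z) *ᵥ x = 0)
    (hopt : ∃ y, star y ⬝ᵥ y = 1 ∧ ∃ Δ ∈ S, (polyEval A z + polyEval Δ z) *ᵥ y = 0 ∧ N Δ ≤ β) :
    etaEig N S z A = etaEig N Set.univ z A := by
  rw [etaEig_eq_of_bounds hlow hfeas hopt, etaEig_eq_of_bounds hlow]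
  · intro x hx
    obtain ⟨Δ, -, hΔ⟩ := hfeas x hx
    exact ⟨Δ, Set.mem_univ Δ, hΔ⟩
  · obtain ⟨y, hy, Δ, -, hΔ⟩ := hopt
    exact ⟨y, hy, Δ, Set.mem_univ Δ, hΔ⟩

lemma eta_smul {u : ℂ} (hu : u ≠ 0) (hN : ∀ B, N (u • B) = N B) (x : ι → ℂ) :
    eta N (u • S) z x (u • A) = eta N S z x A := by
  unfold eta
  congr 1
  ext t
  simp only [Set.mem_smul_set, exists_exists_and_eq_and, polyEval_smul, ← smul_add,
    smul_mulVec, smul_eq_zero, hu, false_or, hN]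

lemma etaEig_smul {u : ℂ} (hu : u ≠ 0) (hN : ∀ B, N (u • B) = N B) :
    etaEig N (u • S) z (u • A) = etaEig N S z A := by
  simp only [etaEig, eta_smul hu hN]

end BackwardErrors

theorem LinearMap.IsSymmetric.exists_eigenvector_abs_mul_norm_le {𝕜 E : Type*} [RCLike 𝕜]
    [NormedAddCommGroup E] [InnerProductSpace 𝕜 E] [FiniteDimensional 𝕜 E] [Nontrivial E]
    {T : E →ₗ[𝕜] E} (hT : T.IsSymmetric) :
    ∃ (μ : ℝ) (v : E), ‖v‖ = 1 ∧ T v = (μ : 𝕜) • v ∧ ∀ x, |μ| * ‖x‖ ≤ ‖T x‖ := by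
  set b := hT.eigenvectorBasis rfl
  set ev := hT.eigenvalues rfl
  have : Nonempty (Fin (Module.finrank 𝕜 E)) := ⟨⟨0, Module.finrank_pos⟩⟩
  obtain ⟨i₀, -, hi₀⟩ := Finset.exists_min_image Finset.univ (fun i => |ev i|) Finset.univ_nonempty
  refine ⟨ev i₀, b i₀, b.orthonormal.1 i₀, hT.apply_eigenvectorBasis rfl i₀, fun x => ?_⟩
  have hsq : (|ev i₀| * ‖x‖) ^ 2 ≤ ‖T x‖ ^ 2 := by
    rw [← b.repr.norm_map x, ← b.repr.norm_map (T x), mul_pow, EuclideanSpace.norm_sq_eq,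
      EuclideanSpace.norm_sq_eq, Finset.mul_sum]
    gcongr with i
    rw [hT.eigenvectorBasis_apply_self_apply, norm_mul, mul_pow, RCLike.norm_ofReal]
    exact mul_le_mul_of_nonneg_right (pow_le_pow_left₀ (abs_nonneg _) (hi₀ i (Finset.mem_univ i)) 2)
      (sq_nonneg _)
  exact (pow_le_pow_iff_left₀ (by positivity) (norm_nonneg _) two_ne_zero).1 hsq

section HermitianMatrices

variable {𝕜 ι : Type*} [RCLike 𝕜] [Fintype ι] {H : Matrix ι ι 𝕜}

theorem Matrix.IsHermitian.exists_eigenvector_abs_mul_norm_le [DecidableEq ι] [Nonempty ι]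
    (hH : H.IsHermitian) : ∃ (μ : ℝ) (y : ι → 𝕜), star y ⬝ᵥ y = 1 ∧ H *ᵥ y = (μ : 𝕜) • y ∧
      ∀ x, |μ| * ‖toLp 2 x‖ ≤ ‖toLp 2 (H *ᵥ x)‖ := by
  obtain ⟨μ, v, hv, hμ, hle⟩ :=
    (isSymmetric_toEuclideanLin_iff.2 hH).exists_eigenvector_abs_mul_norm_le
  refine ⟨μ, WithLp.ofLp v, ?_, congrArg WithLp.ofLp hμ, fun x => hle (toLp 2 x)⟩
  rw [dotProduct_comm, ← EuclideanSpace.inner_eq_star_dotProduct, inner_self_eq_norm_sq_to_K, hv]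
  simp

theorem Matrix.IsHermitian.exists_isHermitian_mulVec_eq (hH : H.IsHermitian) {x : ι → 𝕜}
    (hx : star x ⬝ᵥ x = 1) : ∃ G : Matrix ι ι 𝕜, G.IsHermitian ∧ G *ᵥ x = H *ᵥ x := by
  set r := H *ᵥ x
  set c := star x ⬝ᵥ r
  have hrx : star r ⬝ᵥ x = c := by
    rw [star_mulVec, ← dotProduct_mulVec, hH.eq]
  have hc : star c = c := (star_dotProduct r x).symm.trans hrx
  refine ⟨vecMulVec r (star x) + vecMulVec x (star r) - c • vecMulVec x (star x), ?_, ?_⟩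
  · simp only [IsHermitian, conjTranspose_sub, conjTranspose_add, conjTranspose_smul,
      conjTranspose_vecMulVec, star_star, hc]
    abel
  · simp only [sub_mulVec, add_mulVec, smul_mulVec, vecMulVec_mulVec, op_smul_eq_smul, hx, hrx,
      one_smul]
    abel

end HermitianMatrices

section StructuredBackwardErrors

variable {ι : Type*} [Fintype ι] {m : ℕ} {n : Matrix ι ι ℂ → ℝ}
  {A : Fin (m+1) → Matrix ι ι ℂ}

lemma norm_mulVec_le_of_mulVec_eq_zero (hn : IsAdmissibleNorm n) {z : ℂ} {x : ι → ℂ}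
    (hx : star x ⬝ᵥ x = 1) {Δ : Fin (m+1) → Matrix ι ι ℂ}
    (hΔ : (polyEval A z + polyEval Δ z) *ᵥ x = 0) :
    ‖toLp 2 (polyEval A z *ᵥ x)‖ ≤ √(lamNormSq m z) * polyNormOf n Δ := by
  have hAx : polyEval A z *ᵥ x = -(polyEval Δ z *ᵥ x) :=
    eq_neg_of_add_eq_zero_left (by rwa [← add_mulVec])
  simpa [hAx, norm_toLp_eq_one hx] using norm_polyEval_mulVec_le hn Δ z x

variable [DecidableEq ι]

theorem etaEig_hermPoly_eq_etaEig_univ (hn : IsAdmissibleNorm n) (hA : A ∈ HermPoly) (lam : ℝ) :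
    etaEig (polyNormOf n) HermPoly lam A = etaEig (polyNormOf n) Set.univ lam A := by
  rcases isEmpty_or_nonempty ι with hι | hι
  · rw [etaEig_of_isEmpty, etaEig_of_isEmpty]
  have hH := polyEval_isHermitian hA lam
  obtain ⟨μ, y, hy, hyμ, hμ⟩ := hH.exists_eigenvector_abs_mul_norm_le
  have hL := Real.sqrt_pos.2 (lamNormSq_pos (m := m) (lam : ℂ))
  refine etaEig_eq_etaEig_univ_of_bounds (β := |μ| / √(lamNormSq m lam)) ?_ ?_ ?_
  · intro x hx Δ hΔ
    rw [div_le_iff₀' hL]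
    simpa [norm_toLp_eq_one hx] using (hμ x).trans (norm_mulVec_le_of_mulVec_eq_zero hn hx hΔ)
  · intro x hx
    obtain ⟨G, hG, hGx⟩ := hH.exists_isHermitian_mulVec_eq hx
    refine ⟨minNormLift m lam (-G), minNormLift_mem_hermPoly lam hG.neg, ?_⟩
    rw [polyEval_minNormLift, add_mulVec, neg_mulVec, hGx, add_neg_cancel]
  · have hG : ((μ : ℂ) • vecMulVec y (star y)).IsHermitian := by
      simp [IsHermitian, conjTranspose_smul]
    refine ⟨y, hy, minNormLift m lam (-((μ : ℂ) • vecMulVec y (star y))),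
      minNormLift_mem_hermPoly lam hG.neg, ?_, ?_⟩
    · rw [polyEval_minNormLift, add_mulVec, neg_mulVec, smul_mulVec, vecMulVec_star_mulVec, hy,
        one_smul, hyμ]
      exact add_neg_cancel _
    · rw [polyNormOf_minNormLift hn, ← neg_smul, hn.smul, norm_neg, Complex.norm_real,
        Real.norm_eq_abs]
      exact div_le_div_of_nonneg_right
        (mul_le_of_le_one_right (abs_nonneg μ) (hn.vecMulVec_star_le y hy)) hL.le

lemma smul_I_skewHermPoly :
    (Complex.I • SkewHermPoly : Set (Fin (m+1) → Matrix ι ι ℂ)) = HermPoly := by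
  ext B
  rw [Set.mem_smul_set_iff_inv_smul_mem₀ Complex.I_ne_zero]
  simp [SkewHermPoly, HermPoly, conjTranspose_smul]

theorem etaEig_skewHermPoly_eq_etaEig_univ (hn : IsAdmissibleNorm n) (hA : A ∈ SkewHermPoly)
    (lam : ℝ) :
    etaEig (polyNormOf n) SkewHermPoly lam A = etaEig (polyNormOf n) Set.univ lam A := by
  have hN (B : Fin (m+1) → Matrix ι ι ℂ) : polyNormOf n (Complex.I • B) = polyNormOf n B := by
    rw [polyNormOf_smul hn, Complex.norm_I, one_mul]
  have hIA : Complex.I • A ∈ HermPoly :=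
    smul_I_skewHermPoly (ι := ι) (m := m) ▸ Set.smul_mem_smul_set hA
  rw [← etaEig_smul Complex.I_ne_zero hN, ← etaEig_smul (S := Set.univ) Complex.I_ne_zero hN,
    smul_I_skewHermPoly, Set.smul_set_univ₀ Complex.I_ne_zero]
  exact etaEig_hermPoly_eq_etaEig_univ hn hIA lam

end StructuredBackwardErrors

lemma setOf_im_eq_zero_and_le_congr {f g : ℂ → ℝ} (h : ∀ lam : ℝ, f lam = g lam) (ε : ℝ) :
    {z : ℂ | z.im = 0 ∧ f z ≤ ε} = {z : ℂ | z.im = 0 ∧ g z ≤ ε} := by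
  ext z
  refine and_congr_right fun hz => ?_
  obtain ⟨lam, rfl⟩ : ∃ lam : ℝ, (lam : ℂ) = z := ⟨z.re, Complex.ext (by simp) (by simp [hz])⟩
  rw [h]

theorem hermitian_pseudospectra_real_general {n m : ℕ}
    (A : Fin (m+1) → Matrix (Fin n) (Fin n) ℂ) :
    (A ∈ HermPoly →
      (∀ lam : ℝ,
        etaEig polyNormF HermPoly (lam : ℂ) A = etaEig polyNormF Set.univ (lam : ℂ) A ∧
        etaEig polyNorm2 HermPoly (lam : ℂ) A = etaEig polyNorm2 Set.univ (lam : ℂ) A) ∧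
      (∀ ε : ℝ, 0 < ε →
        {z : ℂ | z.im = 0 ∧ etaEig polyNormF HermPoly z A ≤ ε}
          = {z : ℂ | z.im = 0 ∧ etaEig polyNormF Set.univ z A ≤ ε} ∧
        {z : ℂ | z.im = 0 ∧ etaEig polyNorm2 HermPoly z A ≤ ε}
          = {z : ℂ | z.im = 0 ∧ etaEig polyNorm2 Set.univ z A ≤ ε})) ∧
    (A ∈ SkewHermPoly →
      (∀ lam : ℝ,
        etaEig polyNormF SkewHermPoly (lam : ℂ) A
          = etaEig polyNormF Set.univ (lam : ℂ) A ∧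
        etaEig polyNorm2 SkewHermPoly (lam : ℂ) A
          = etaEig polyNorm2 Set.univ (lam : ℂ) A) ∧
      (∀ ε : ℝ, 0 < ε →
        {z : ℂ | z.im = 0 ∧ etaEig polyNormF SkewHermPoly z A ≤ ε}
          = {z : ℂ | z.im = 0 ∧ etaEig polyNormF Set.univ z A ≤ ε} ∧
        {z : ℂ | z.im = 0 ∧ etaEig polyNorm2 SkewHermPoly z A ≤ ε}
          = {z : ℂ | z.im = 0 ∧ etaEig polyNorm2 Set.univ z A ≤ ε})) := by
  rw [polyNormF_eq_polyNormOf, polyNorm2_eq_polyNormOf]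
  have hF := isAdmissibleNorm_sqrt_frobNormSq (ι := Fin n)
  have h2 := isAdmissibleNorm_specNorm (ι := Fin n)
  refine ⟨fun hA => ?_, fun hA => ?_⟩
  · have hF' := etaEig_hermPoly_eq_etaEig_univ hF hA
    have h2' := etaEig_hermPoly_eq_etaEig_univ h2 hA
    exact ⟨fun lam => ⟨hF' lam, h2' lam⟩, fun ε _ =>
      ⟨setOf_im_eq_zero_and_le_congr hF' ε, setOf_im_eq_zero_and_le_congr h2' ε⟩⟩
  · have hF' := etaEig_skewHermPoly_eq_etaEig_univ hF hA
    have h2' := etaEig_skewHermPoly_eq_etaEig_univ h2 hA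
    exact ⟨fun lam => ⟨hF' lam, h2' lam⟩, fun ε _ =>
      ⟨setOf_im_eq_zero_and_le_congr hF' ε, setOf_im_eq_zero_and_le_congr h2' ε⟩⟩

/-- For a regular Hermitian (resp. skew-Hermitian) matrix polynomial, the
structured eigenvalue backward error at a real point equals the unstructured one, for both
the Frobenius and the spectral norm; consequently the structured and unstructured
ε-pseudospectra coincide on the real axis. -/
theorem hermitian_pseudospectra_real {n m : ℕ}
    (A : Fin (m+1) → Matrix (Fin n) (Fin n) ℂ) (hreg : Regular A) :
    (A ∈ HermPoly →
      (∀ lam : ℝ,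
        etaEig polyNormF HermPoly (lam : ℂ) A = etaEig polyNormF Set.univ (lam : ℂ) A ∧
        etaEig polyNorm2 HermPoly (lam : ℂ) A = etaEig polyNorm2 Set.univ (lam : ℂ) A) ∧
      (∀ ε : ℝ, 0 < ε →
        {z : ℂ | z.im = 0 ∧ etaEig polyNormF HermPoly z A ≤ ε}
          = {z : ℂ | z.im = 0 ∧ etaEig polyNormF Set.univ z A ≤ ε} ∧
        {z : ℂ | z.im = 0 ∧ etaEig polyNorm2 HermPoly z A ≤ ε}
          = {z : ℂ | z.im = 0 ∧ etaEig polyNorm2 Set.univ z A ≤ ε})) ∧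
    (A ∈ SkewHermPoly →
      (∀ lam : ℝ,
        etaEig polyNormF SkewHermPoly (lam : ℂ) A
          = etaEig polyNormF Set.univ (lam : ℂ) A ∧
        etaEig polyNorm2 SkewHermPoly (lam : ℂ) A
          = etaEig polyNorm2 Set.univ (lam : ℂ) A) ∧
      (∀ ε : ℝ, 0 < ε →
        {z : ℂ | z.im = 0 ∧ etaEig polyNormF SkewHermPoly z A ≤ ε}
          = {z : ℂ | z.im = 0 ∧ etaEig polyNormF Set.univ z A ≤ ε} ∧
        {z : ℂ | z.im = 0 ∧ etaEig polyNorm2 SkewHermPoly z A ≤ ε}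
          = {z : ℂ | z.im = 0 ∧ etaEig polyNorm2 Set.univ z A ≤ ε})) :=
  hermitian_pseudospectra_real_general A
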